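/- If R ∈ RatFunc ℂ satisfies 𝔉(R) = R, then the denominator of R (written in lowest terms) is squarefree — i.e. all poles of R are simple — and every root z ∈ ℂ of the denominator is either z = 0 or satisfies z^r = 1 for some odd positive integer r. -/

import Mathlib

/-- The `n`-th coefficient of the Laurent expansion at `0` of a rational function. -/
noncomputable def coeffL (R : RatFunc ℂ) (n : ℤ) : ℂ :=
  ((R : LaurentSeries ℂ)).coeff n

/-!
Write `R = p / q` in lowest terms and `f⁻ = f(-X)`. The condition `a_{2k+1}(R) = a_k(R)` says that
the Laurent expansion `L` of `R` satisfies `L - L(-X) = 2X · L(X²)`, i.e.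
`(p q⁻ - p⁻ q) · q(X²) = 2X · p(X²) · q q⁻`. As `q(X²)` is prime to `p(X²)`, it divides `X · q q⁻`,
which has one degree more and is odd; hence `q q⁻ = a · q(X²)` with `a ≠ 0`, and the root
multiplicities `μ` of `q` satisfy `μ z + μ (-z) = μ (z²)` for `z ≠ 0`.

So `μ` does not decrease along `z, z², z⁴, …`, and since `-w` is not a root when `μ w = μ (w²)`,
two points of the orbit of a nonzero root can only meet after the orbit has returned to `z`:
`z ^ 2 ^ k = z`, and `z` is a root of unity of odd order dividing `2 ^ k - 1`. Along this cycle
`μ = m` is constant, and comparing the leading coefficients of the pole of order `m` at `z ^ 2 ^ c` on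
both sides of the functional equation multiplies a nonzero quantity by `2 ^ (m - 1)` at each step;
going once around the cycle gives `2 ^ ((m - 1) k) = 1`, so `m = 1`. At `0`, `X² ∣ q` would force
`X ∣ p`.
-/

open Polynomial LaurentSeries

theorem pow_two_pow_succ {M : Type*} [Monoid M] (z : M) (c : ℕ) :
    z ^ 2 ^ (c + 1) = (z ^ 2 ^ c) ^ 2 := by
  rw [← pow_mul, ← pow_succ]

namespace LaurentSeries

variable {K : Type*} [Field K]

noncomputable def compNegX : K⸨X⸩ →+* K⸨X⸩ where
  toFun f := ⟨fun n => (-1) ^ n * f.coeff n,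
    f.isPWO_support.mono fun n hn => right_ne_zero_of_mul hn⟩
  map_zero' := by ext; simp
  map_one' := by ext n; by_cases hn : n = 0 <;> simp [HahnSeries.coeff_one, hn]
  map_add' f g := by ext; simp [mul_add]
  map_mul' f g := by
    have hsupp (h : K⸨X⸩) : (⟨fun n => (-1) ^ n * h.coeff n,
        h.isPWO_support.mono fun n hn => right_ne_zero_of_mul hn⟩ : K⸨X⸩).support =
        h.support := by
      ext; simp [zpow_ne_zero]
    ext n
    simp only [HahnSeries.coeff_mul, Finset.mul_sum, hsupp]
    refine Finset.sum_congr rfl fun ij hij => ?_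
    rw [← (Finset.mem_antidiagonal.mp hij).2.2, zpow_add₀ (by norm_num)]
    ring

@[simp]
theorem coeff_compNegX (f : K⸨X⸩) (n : ℤ) : (compNegX f).coeff n = (-1) ^ n * f.coeff n := rfl

noncomputable def compXSq : K⸨X⸩ →+* K⸨X⸩ :=
  HahnSeries.embDomainRingHom (AddMonoidHom.mulLeft 2) (fun a b h => by simpa using h)
    (fun a b => by simp)

theorem coeff_compXSq_two_mul (f : K⸨X⸩) (n : ℤ) : (compXSq f).coeff (2 * n) = f.coeff n :=
  HahnSeries.embDomain_coeff (a := n)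

theorem coeff_compXSq_two_mul_add_one (f : K⸨X⸩) (n : ℤ) : (compXSq f).coeff (2 * n + 1) = 0 :=
  HahnSeries.embDomain_of_notMem_range fun ⟨m, hm⟩ => by simp at hm; omega

theorem compXSq_single (n : ℤ) (a : K) :
    compXSq (HahnSeries.single n a) = HahnSeries.single (2 * n) a :=
  HahnSeries.embDomain_single

theorem compNegX_algebraMap (p : K[X]) :
    compNegX (algebraMap K[X] K⸨X⸩ p) = algebraMap K[X] K⸨X⸩ (p.comp (-X)) := by
  suffices compNegX.comp (algebraMap K[X] K⸨X⸩) =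
      (algebraMap K[X] K⸨X⸩).comp (compRingHom (-X)) from DFunLike.congr_fun this p
  refine Polynomial.ringHom_ext (fun a => ?_) ?_
  · ext n
    by_cases hn : n = 0 <;> simp [hn]
  · ext n
    by_cases hn : n = 1 <;> simp [hn]

theorem compXSq_algebraMap (p : K[X]) :
    compXSq (algebraMap K[X] K⸨X⸩ p) = algebraMap K[X] K⸨X⸩ (p.comp (X ^ 2)) := by
  suffices compXSq.comp (algebraMap K[X] K⸨X⸩) =
      (algebraMap K[X] K⸨X⸩).comp (compRingHom (X ^ 2)) from DFunLike.congr_fun this p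
  refine Polynomial.ringHom_ext (fun a => ?_) ?_
  · simp [compXSq_single]
  · simp [compXSq_single]

theorem sub_compNegX_eq_single_mul_compXSq {L : K⸨X⸩}
    (hL : ∀ k, L.coeff (2 * k + 1) = L.coeff k) :
    L - compNegX L = HahnSeries.single 1 2 * compXSq L := by
  ext n
  have hshift : (HahnSeries.single 1 2 * compXSq L).coeff n = 2 * (compXSq L).coeff (n - 1) := by
    simpa using HahnSeries.coeff_single_mul_add (r := (2 : K)) (x := compXSq L) (a := n - 1)
      (b := 1)
  rw [HahnSeries.coeff_sub, coeff_compNegX, hshift]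
  obtain ⟨k, rfl | rfl⟩ := Int.even_or_odd' n
  · rw [show 2 * k - 1 = 2 * (k - 1) + 1 by ring, coeff_compXSq_two_mul_add_one,
      (even_two_mul k).neg_one_zpow]
    ring
  · rw [add_sub_cancel_right, coeff_compXSq_two_mul, hL, (odd_two_mul_add_one k).neg_one_zpow]
    ring

end LaurentSeries

namespace Polynomial

section CommRing

variable {R : Type*} [CommRing R]

theorem rootMultiplicity_comp_neg_X (p : R[X]) (z : R) :
    (p.comp (-X)).rootMultiplicity z = p.rootMultiplicity (-z) := by
  simpa using rootMultiplicity_comp_C_mul_X_add_C p (-1) 0 z isUnit_one.neg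

theorem comp_X_sq_eq_mul (p : R[X]) (z : R) :
    p.comp (X ^ 2) = (X - C z) ^ p.rootMultiplicity (z ^ 2) *
      ((X + C z) ^ p.rootMultiplicity (z ^ 2) *
        (p /ₘ (X - C (z ^ 2)) ^ p.rootMultiplicity (z ^ 2)).comp (X ^ 2)) := by
  conv_lhs => rw [← pow_mul_divByMonic_rootMultiplicity_eq p (z ^ 2)]
  rw [mul_comp, pow_comp, sub_comp, X_comp, C_comp,
    show (X ^ 2 - C (z ^ 2) : R[X]) = (X - C z) * (X + C z) by rw [C_pow]; ring, mul_pow]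
  ring

end CommRing

variable {K : Type*} [Field K]

theorem comp_X_sq_eq_zero_iff {p : K[X]} : p.comp (X ^ 2) = 0 ↔ p = 0 := by
  simp [comp_eq_zero_iff]

theorem rootMultiplicity_comp_X_sq [NeZero (2 : K)] (p : K[X]) {z : K} (hz : z ≠ 0) :
    (p.comp (X ^ 2)).rootMultiplicity z = p.rootMultiplicity (z ^ 2) := by
  rcases eq_or_ne p 0 with rfl | hp
  · simp
  have hcomp : p.comp (X ^ 2) ≠ 0 := comp_X_sq_eq_zero_iff.not.mpr hp
  rw [comp_X_sq_eq_mul p z] at hcomp ⊢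
  rw [rootMultiplicity_mul hcomp, rootMultiplicity_X_sub_C_pow, add_eq_left,
    rootMultiplicity_eq_zero]
  simp only [IsRoot.def, eval_mul, eval_pow, eval_add, eval_X, eval_C, eval_comp, ← two_mul]
  exact mul_ne_zero (pow_ne_zero _ (mul_ne_zero two_ne_zero hz))
    (eval_divByMonic_pow_rootMultiplicity_ne_zero _ hp)

theorem eval_ne_zero_of_isCoprime {p q : K[X]} (h : IsCoprime p q) {z : K} (hz : q.IsRoot z) :
    p.eval z ≠ 0 := by
  simpa [hz.eq_zero] using aeval_ne_zero_of_isCoprime h z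

section SquaringOrbit

variable {q : K[X]} {z : K}

theorem monotone_rootMultiplicity_pow_two_pow
    (h : ∀ w ≠ 0, q.rootMultiplicity w + q.rootMultiplicity (-w) = q.rootMultiplicity (w ^ 2))
    (hz : z ≠ 0) : Monotone fun c : ℕ => q.rootMultiplicity (z ^ 2 ^ c) :=
  monotone_nat_of_le_succ fun c => by
    rw [pow_two_pow_succ, ← h _ (pow_ne_zero _ hz)]
    exact Nat.le_add_right _ _

theorem isRoot_pow_two_pow (hq : q ≠ 0)
    (h : ∀ w ≠ 0, q.rootMultiplicity w + q.rootMultiplicity (-w) = q.rootMultiplicity (w ^ 2))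
    (hz0 : z ≠ 0) (hz : q.IsRoot z) (c : ℕ) : q.IsRoot (z ^ 2 ^ c) := by
  rw [← rootMultiplicity_pos hq] at hz ⊢
  have hle := monotone_rootMultiplicity_pow_two_pow h hz0 c.zero_le
  simp only [pow_zero, pow_one] at hle
  exact hz.trans_le hle

theorem pow_two_pow_eq_of_pow_two_pow_succ_eq (hq : q ≠ 0)
    (h : ∀ w ≠ 0, q.rootMultiplicity w + q.rootMultiplicity (-w) = q.rootMultiplicity (w ^ 2))
    (hz0 : z ≠ 0) (hz : q.IsRoot z) {i j : ℕ} (hij : i < j)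
    (heq : z ^ 2 ^ (i + 1) = z ^ 2 ^ (j + 1)) : z ^ 2 ^ i = z ^ 2 ^ j := by
  by_contra hne
  have hsq : (z ^ 2 ^ i) ^ 2 = (z ^ 2 ^ j) ^ 2 := by
    rw [← pow_two_pow_succ, ← pow_two_pow_succ, heq]
  have hneg : z ^ 2 ^ i = -z ^ 2 ^ j := (sq_eq_sq_iff_eq_or_eq_neg.mp hsq).resolve_left hne
  have hmult := h _ (pow_ne_zero (2 ^ j) hz0)
  have hle := monotone_rootMultiplicity_pow_two_pow h hz0 (show i + 1 ≤ j by omega)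
  have hroot := (rootMultiplicity_pos hq).2 (hneg ▸ isRoot_pow_two_pow hq h hz0 hz i)
  rw [← pow_two_pow_succ, ← heq] at hmult
  simp only at hle
  omega

theorem exists_pow_two_pow_eq_self (hq : q ≠ 0)
    (h : ∀ w ≠ 0, q.rootMultiplicity w + q.rootMultiplicity (-w) = q.rootMultiplicity (w ^ 2))
    (hz0 : z ≠ 0) (hz : q.IsRoot z) : ∃ k, 0 < k ∧ z ^ 2 ^ k = z := by
  obtain ⟨i, j, hij, heq⟩ := Set.Finite.exists_lt_map_eq_of_forall_mem (f := fun c => z ^ 2 ^ c)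
    (isRoot_pow_two_pow hq h hz0 hz) (finite_setOfPred_isRoot hq)
  refine ⟨j - i, by omega, ?_⟩
  induction i generalizing j with
  | zero => simpa using heq.symm
  | succ i ih =>
    obtain ⟨j, rfl⟩ : ∃ j', j = j' + 1 := ⟨j - 1, by omega⟩
    simpa using ih j (by omega)
      (pow_two_pow_eq_of_pow_two_pow_succ_eq hq h hz0 hz (by omega) heq)

theorem rootMultiplicity_pow_two_pow_eq
    (h : ∀ w ≠ 0, q.rootMultiplicity w + q.rootMultiplicity (-w) = q.rootMultiplicity (w ^ 2))
    (hz0 : z ≠ 0) {k : ℕ} (hzk : z ^ 2 ^ k = z) {c : ℕ} (hc : c ≤ k) :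
    q.rootMultiplicity (z ^ 2 ^ c) = q.rootMultiplicity z := by
  have hmono := monotone_rootMultiplicity_pow_two_pow h hz0
  have h0 := hmono c.zero_le
  have hk := hmono hc
  simp only [pow_zero, pow_one, hzk] at h0 hk
  omega

theorem squarefree_of_rootMultiplicity_le_one [IsAlgClosed K] {q : K[X]} (hq : q ≠ 0)
    (h : ∀ z, q.rootMultiplicity z ≤ 1) : Squarefree q := by
  classical
  refine ((nodup_roots_iff_of_splits hq (IsAlgClosed.splits q)).mp ?_).squarefree
  exact Multiset.nodup_iff_count_le_one.mpr fun z => (count_roots q).trans_le (h z)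

end SquaringOrbit

end Polynomial

section FixedPoints

variable {K : Type*} [Field K]

/-- `R` is a fixed point of `𝔉`. -/
def OddCoeffFixed (R : RatFunc K) : Prop :=
  ∀ k : ℤ, (R : K⸨X⸩).coeff (2 * k + 1) = (R : K⸨X⸩).coeff k

/-- Near a pole `w` of order `m`, `R ~ w ^ (m - 1) * scaledPoleCoeff R m w / (X - w) ^ m`; the
normalisation by `w ^ (m - 1)` makes `scaledPoleCoeff` transform simply under `w ↦ w ^ 2`. -/
noncomputable def scaledPoleCoeff (R : RatFunc K) (m : ℕ) (w : K) : K :=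
  R.num.eval w / ((R.denom /ₘ (X - C w) ^ m).eval w * w ^ (m - 1))

namespace OddCoeffFixed

variable {R : RatFunc K}

theorem num_denom_identity (hR : OddCoeffFixed R) :
    (R.num * R.denom.comp (-X) - R.num.comp (-X) * R.denom) * R.denom.comp (X ^ 2) =
      C 2 * X * R.num.comp (X ^ 2) * (R.denom * R.denom.comp (-X)) := by
  let φ := algebraMap K[X] K⸨X⸩
  have hφ : Function.Injective φ := FaithfulSMul.algebraMap_injective K[X] K⸨X⸩
  have hL : φ R.denom * R = φ R.num := by
    have h := RatFunc.algebraMap_apply_div R.num R.denom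
    rw [R.num_div_denom] at h
    rw [h, mul_div_cancel₀ _ ((map_ne_zero_iff _ hφ).mpr R.denom_ne_zero)]
  have hneg := congrArg compNegX hL
  have hsq := congrArg compXSq hL
  rw [map_mul, compNegX_algebraMap, compNegX_algebraMap] at hneg
  rw [map_mul, compXSq_algebraMap, compXSq_algebraMap] at hsq
  have h2X : φ (C 2 * X) = HahnSeries.single 1 2 := by simp [φ]
  apply hφ
  simp only [map_mul, map_sub] at h2X ⊢
  -- `L - L(-X) = 2X · L(X²)`, multiplied by `q · q(-X) · q(X²)`
  linear_combination (φ R.denom * φ (R.denom.comp (-X)) * φ (R.denom.comp (X ^ 2))) *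
      sub_compNegX_eq_single_mul_compXSq hR -
    (φ (R.denom.comp (-X)) * φ (R.denom.comp (X ^ 2))) * hL +
    (φ R.denom * φ (R.denom.comp (X ^ 2))) * hneg +
    (HahnSeries.single 1 2 * φ R.denom * φ (R.denom.comp (-X))) * hsq -
    (φ (R.num.comp (X ^ 2)) * φ R.denom * φ (R.denom.comp (-X))) * h2X

theorem exists_denom_mul_comp_neg_X_eq [NeZero (2 : K)] (hR : OddCoeffFixed R) :
    ∃ a : K, a ≠ 0 ∧ R.denom * R.denom.comp (-X) = C a * R.denom.comp (X ^ 2) := by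
  set q := R.denom
  have hq : q ≠ 0 := R.denom_ne_zero
  have hq' : q.comp (-X) ≠ 0 := comp_neg_X_eq_zero_iff.not.mpr hq
  have hq2 : q.comp (X ^ 2) ≠ 0 := comp_X_sq_eq_zero_iff.not.mpr hq
  obtain ⟨t, ht⟩ : q.comp (X ^ 2) ∣ X * (q * q.comp (-X)) := by
    have hcop : IsCoprime (q.comp (X ^ 2)) (R.num.comp (X ^ 2)) :=
      R.isCoprime_num_denom.symm.map (compRingHom (X ^ 2))
    refine (isUnit_C.mpr (two_ne_zero (α := K)).isUnit).dvd_mul_left.mp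
      (hcop.dvd_of_dvd_mul_left ⟨R.num * q.comp (-X) - R.num.comp (-X) * q, ?_⟩)
    linear_combination -(num_denom_identity hR)
  have ht0 : t ≠ 0 := by rintro rfl; simp [hq, hq'] at ht
  have hdeg : t.natDegree ≤ 1 := by
    have := congrArg natDegree ht
    rw [natDegree_mul X_ne_zero (mul_ne_zero hq hq'), natDegree_mul hq2 ht0,
      natDegree_mul hq hq'] at this
    simp only [natDegree_X, natDegree_comp, natDegree_neg, natDegree_pow, mul_one] at this
    omega
  rw [eq_X_add_C_of_natDegree_le_one hdeg] at ht
  set a := t.coeff 1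
  set b := t.coeff 0
  -- `X * (q * q(-X))` is odd and `q(X²)` even, so `t` is odd
  have hneg := congrArg (fun f => f.comp (-X)) ht
  simp only [mul_comp, add_comp, X_comp, C_comp, comp_assoc, neg_comp, pow_comp, neg_sq, neg_neg,
    comp_X] at hneg
  have hb : b = 0 := by
    have : q.comp (X ^ 2) * C (2 * b) = 0 := by
      rw [C_mul, map_ofNat]
      linear_combination -(ht + hneg)
    simpa [hq2, two_ne_zero] using this
  rw [hb, C_0, add_zero] at ht
  refine ⟨a, fun ha => ?_, mul_left_cancel₀ X_ne_zero ?_⟩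
  · simp [ha, hq, hq'] at ht
  · linear_combination ht

theorem num_mul_comp_neg_X_sub_eq (hR : OddCoeffFixed R) {a : K}
    (ha : R.denom * R.denom.comp (-X) = C a * R.denom.comp (X ^ 2)) :
    R.num * R.denom.comp (-X) - R.num.comp (-X) * R.denom = C (2 * a) * X * R.num.comp (X ^ 2) := by
  refine mul_right_cancel₀ (comp_X_sq_eq_zero_iff.not.mpr R.denom_ne_zero) ?_
  rw [C_mul]
  linear_combination hR.num_denom_identity + C 2 * X * R.num.comp (X ^ 2) * ha

theorem rootMultiplicity_add_rootMultiplicity_neg [NeZero (2 : K)] (hR : OddCoeffFixed R)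
    {z : K} (hz : z ≠ 0) :
    R.denom.rootMultiplicity z + R.denom.rootMultiplicity (-z) =
      R.denom.rootMultiplicity (z ^ 2) := by
  obtain ⟨a, ha, hS⟩ := hR.exists_denom_mul_comp_neg_X_eq
  have hq := R.denom_ne_zero
  have hmult := congrArg (rootMultiplicity z) hS
  rwa [rootMultiplicity_mul (mul_ne_zero hq (comp_neg_X_eq_zero_iff.not.mpr hq)),
    rootMultiplicity_mul (mul_ne_zero (C_ne_zero.mpr ha) (comp_X_sq_eq_zero_iff.not.mpr hq)),
    rootMultiplicity_comp_neg_X, rootMultiplicity_comp_X_sq _ hz, rootMultiplicity_C,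
    zero_add] at hmult

theorem rootMultiplicity_denom_zero_le_one [NeZero (2 : K)] (hR : OddCoeffFixed R) :
    R.denom.rootMultiplicity 0 ≤ 1 := by
  obtain ⟨a, ha, hS⟩ := hR.exists_denom_mul_comp_neg_X_eq
  by_contra! h2
  have hX2 : X ^ 2 ∣ R.denom := by
    simpa using (le_rootMultiplicity_iff R.denom_ne_zero).mp h2
  have hX2' : X ^ 2 ∣ R.denom.comp (-X) := (dvd_comp_neg_X_iff _ _).mpr (by simpa using hX2)
  have hdvd : X * X ∣ X * (C (2 * a) * R.num.comp (X ^ 2)) := by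
    rw [← sq, ← mul_assoc, mul_comm X, ← hR.num_mul_comp_neg_X_sub_eq hS]
    exact dvd_sub (dvd_mul_of_dvd_right hX2' _) (dvd_mul_of_dvd_right hX2 _)
  have hX : X ∣ R.num.comp (X ^ 2) :=
    (isUnit_C.mpr (mul_ne_zero two_ne_zero ha).isUnit).dvd_mul_left.mp
      ((mul_dvd_mul_iff_left X_ne_zero).mp hdvd)
  refine eval_ne_zero_of_isCoprime R.isCoprime_num_denom (z := 0) ?_ ?_
  · simpa [X_dvd_iff, coeff_zero_eq_eval_zero] using dvd_trans (dvd_pow_self X two_ne_zero) hX2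
  · simpa [X_dvd_iff, coeff_zero_eq_eval_zero, eval_comp] using hX

theorem num_eval_mul_eq_of_rootMultiplicity_eq (hR : OddCoeffFixed R) {w : K} {m : ℕ}
    (hm : 0 < m) (hμ : R.denom.rootMultiplicity w = m)
    (hμ2 : R.denom.rootMultiplicity (w ^ 2) = m) (hneg : ¬R.denom.IsRoot (-w)) :
    R.num.eval w * (2 * w) ^ m * (R.denom /ₘ (X - C (w ^ 2)) ^ m).eval (w ^ 2) =
      2 * w * R.num.eval (w ^ 2) * (R.denom /ₘ (X - C w) ^ m).eval w := by
  set p := R.num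
  set q := R.denom
  set A := q /ₘ (X - C w) ^ m
  set B := q /ₘ (X - C (w ^ 2)) ^ m
  have hA : (X - C w) ^ m * A = q := by
    subst hμ
    exact pow_mul_divByMonic_rootMultiplicity_eq q w
  have hB : q.comp (X ^ 2) = (X - C w) ^ m * ((X + C w) ^ m * B.comp (X ^ 2)) := by
    subst hμ2
    exact comp_X_sq_eq_mul q w
  have hcancel : (p * q.comp (-X) - p.comp (-X) * ((X - C w) ^ m * A)) *
      ((X + C w) ^ m * B.comp (X ^ 2)) = C 2 * X * p.comp (X ^ 2) * (A * q.comp (-X)) := by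
    refine mul_left_cancel₀ (pow_ne_zero m (X_sub_C_ne_zero w)) ?_
    linear_combination hR.num_denom_identity -
      (p * q.comp (-X) - p.comp (-X) * ((X - C w) ^ m * A)) * hB -
      (p.comp (-X) * q.comp (X ^ 2) + C 2 * X * p.comp (X ^ 2) * q.comp (-X)) * hA
  have heval := congrArg (eval w) hcancel
  simp only [eval_mul, eval_sub, eval_pow, eval_add, eval_X, eval_C, eval_comp, sub_self,
    zero_pow hm.ne', eval_neg] at heval
  exact mul_right_cancel₀ hneg (by linear_combination heval)

theorem scaledPoleCoeff_sq [NeZero (2 : K)] (hR : OddCoeffFixed R) {w : K} {m : ℕ} (hw : w ≠ 0)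
    (hm : 0 < m) (hμ : R.denom.rootMultiplicity w = m)
    (hμ2 : R.denom.rootMultiplicity (w ^ 2) = m) (hneg : ¬R.denom.IsRoot (-w)) :
    scaledPoleCoeff R m (w ^ 2) = 2 ^ (m - 1) * scaledPoleCoeff R m w := by
  have key := hR.num_eval_mul_eq_of_rootMultiplicity_eq hm hμ hμ2 hneg
  have hA : (R.denom /ₘ (X - C w) ^ m).eval w ≠ 0 := by
    subst hμ
    exact eval_divByMonic_pow_rootMultiplicity_ne_zero w R.denom_ne_zero
  have hB : (R.denom /ₘ (X - C (w ^ 2)) ^ m).eval (w ^ 2) ≠ 0 := by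
    subst hμ2
    exact eval_divByMonic_pow_rootMultiplicity_ne_zero _ R.denom_ne_zero
  obtain ⟨n, rfl⟩ : ∃ n, m = n + 1 := ⟨m - 1, by omega⟩
  have key' : R.num.eval w * 2 ^ n * w ^ n * (R.denom /ₘ (X - C (w ^ 2)) ^ (n + 1)).eval (w ^ 2) =
      R.num.eval (w ^ 2) * (R.denom /ₘ (X - C w) ^ (n + 1)).eval w :=
    mul_left_cancel₀ (mul_ne_zero two_ne_zero hw) (by linear_combination key)
  simp only [scaledPoleCoeff, Nat.add_sub_cancel]
  field_simp
  linear_combination -w ^ n * key'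

theorem rootMultiplicity_denom_eq_one [CharZero K] (hR : OddCoeffFixed R) {z : K} (hz0 : z ≠ 0)
    (hz : R.denom.IsRoot z) {k : ℕ} (hk : 0 < k) (hzk : z ^ 2 ^ k = z) :
    R.denom.rootMultiplicity z = 1 := by
  have hq := R.denom_ne_zero
  have h (w : K) (hw : w ≠ 0) := hR.rootMultiplicity_add_rootMultiplicity_neg hw
  set m := R.denom.rootMultiplicity z
  have hm : 0 < m := (rootMultiplicity_pos hq).2 hz
  have hμ (c : ℕ) (hc : c ≤ k) : R.denom.rootMultiplicity (z ^ 2 ^ c) = m :=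
    rootMultiplicity_pow_two_pow_eq h hz0 hzk hc
  have hneg (c : ℕ) (hc : c < k) : ¬R.denom.IsRoot (-z ^ 2 ^ c) := by
    intro hroot
    have hsum := h _ (pow_ne_zero (2 ^ c) hz0)
    rw [← pow_two_pow_succ, hμ c hc.le, hμ (c + 1) hc] at hsum
    have := (rootMultiplicity_pos hq).2 hroot
    omega
  have hiter (c : ℕ) (hc : c ≤ k) :
      scaledPoleCoeff R m (z ^ 2 ^ c) = 2 ^ ((m - 1) * c) * scaledPoleCoeff R m z := by
    induction c with
    | zero => simp
    | succ c ih =>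
      rw [pow_two_pow_succ, hR.scaledPoleCoeff_sq (pow_ne_zero _ hz0) hm (hμ c (by omega))
        (by rw [← pow_two_pow_succ]; exact hμ (c + 1) hc) (hneg c hc), ih (by omega)]
      ring
  have hρ : scaledPoleCoeff R m z ≠ 0 :=
    div_ne_zero (eval_ne_zero_of_isCoprime R.isCoprime_num_denom hz)
      (mul_ne_zero (eval_divByMonic_pow_rootMultiplicity_ne_zero z hq) (pow_ne_zero _ hz0))
  have h2 : (2 : K) ^ ((m - 1) * k) = 1 := by
    have := hiter k le_rfl
    rw [hzk] at this
    exact (mul_eq_right₀ hρ).mp this.symm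
  have : (m - 1) * k = 0 := by
    have h2' : ((2 ^ ((m - 1) * k) : ℕ) : K) = ((1 : ℕ) : K) := by push_cast; exact h2
    simpa using Nat.cast_inj.mp h2'
  rcases Nat.mul_eq_zero.mp this with hm1 | hk0 <;> omega

theorem squarefree_denom [CharZero K] [IsAlgClosed K] (hR : OddCoeffFixed R) :
    Squarefree R.denom := by
  refine squarefree_of_rootMultiplicity_le_one R.denom_ne_zero fun z => ?_
  rcases eq_or_ne z 0 with rfl | hz0
  · exact hR.rootMultiplicity_denom_zero_le_one
  by_cases hz : R.denom.IsRoot z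
  · obtain ⟨k, hk, hzk⟩ := exists_pow_two_pow_eq_self R.denom_ne_zero
      (fun w hw => hR.rootMultiplicity_add_rootMultiplicity_neg hw) hz0 hz
    exact (hR.rootMultiplicity_denom_eq_one hz0 hz hk hzk).le
  · simp [rootMultiplicity_eq_zero hz]

theorem eq_zero_or_exists_odd_pow_eq_one [NeZero (2 : K)] (hR : OddCoeffFixed R) {z : K}
    (hz : R.denom.IsRoot z) : z = 0 ∨ ∃ r : ℕ, Odd r ∧ 0 < r ∧ z ^ r = 1 := by
  refine or_iff_not_imp_left.mpr fun hz0 => ?_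
  obtain ⟨k, hk, hzk⟩ := exists_pow_two_pow_eq_self R.denom_ne_zero
    (fun w hw => hR.rootMultiplicity_add_rootMultiplicity_neg hw) hz0 hz
  refine ⟨2 ^ k - 1,
    Nat.Even.sub_odd Nat.one_le_two_pow (Nat.even_pow.mpr ⟨even_two, hk.ne'⟩) odd_one,
    Nat.sub_pos_of_lt (Nat.one_lt_two_pow hk.ne'), mul_right_cancel₀ hz0 ?_⟩
  rw [← pow_succ, Nat.sub_add_cancel Nat.one_le_two_pow, hzk, one_mul]

end OddCoeffFixed

end FixedPoints

theorem stmt_16 (F : RatFunc ℂ → RatFunc ℂ)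
    (hF : ∀ R : RatFunc ℂ, ∀ k : ℤ, coeffL (F R) k = coeffL R (2 * k + 1))
    (R : RatFunc ℂ) (hR : F R = R) :
    Squarefree R.denom ∧
    ∀ z : ℂ, R.denom.eval z = 0 →
      z = 0 ∨ ∃ r : ℕ, Odd r ∧ 0 < r ∧ z ^ r = 1 := by
  have hfix : OddCoeffFixed R := fun k => by simpa [coeffL, hR] using (hF R k).symm
  exact ⟨hfix.squarefree_denom, fun z hz => hfix.eq_zero_or_exists_odd_pow_eq_one hz⟩
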